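/- Let A be an S-structure with ∅ ≤ₛ A, and let A* be its generic R-representation (adding, for each clique C of A and each 1 ≤ i ≤ 𝔪(C), a fresh pair of designated witnesses related exactly to the elements of C). Then ∅ ≤ A* as an R-structure (every subset of A* has nonnegative R-predimension d₀), and A ≤ₛ A*. -/

import Mathlib

variable {α : Type*} [DecidableEq α] {β : Type*} [DecidableEq β]

/-- `|X|* = max(0, |X| - 2)`. -/
def cardStar (X : Finset α) : ℤ := max 0 ((X.card : ℤ) - 2)

/-- An S-structure: a carrier set together with a pre-multiplicity function `pm` on
finite sets (its support being the set of declared maximal cliques, each a subset of the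
carrier of size `≥ 3`, with pre-multiplicity at most 3), such that every finite set meets
only finitely many cliques in `≥ 3` points, and the associated multiplicity function
`m(D) = Σ_{D ⊆ C} pm C` satisfies the validity bound `m(D)·(|D|-2) ≤ |D|`. -/
structure SStruct (α : Type*) [DecidableEq α] where
  carrier : Set α
  pm : Finset α → ℕ
  pm_le : ∀ C, pm C ≤ 3
  pm_supp : ∀ C, pm C ≠ 0 → ↑C ⊆ carrier ∧ 3 ≤ C.card
  finite_meets : ∀ X : Finset α, {C : Finset α | pm C ≠ 0 ∧ 3 ≤ (C ∩ X).card}.Finite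
  valid : ∀ D : Finset α, 3 ≤ D.card →
    (∑ᶠ C ∈ {C : Finset α | D ⊆ C}, pm C) * (D.card - 2) ≤ D.card

/-- The S-predimension of a finite subset `X` of the ambient S-structure `N`:
`d₀ₛ(X) = |X| - Σ_C pm(C)·|C ∩ X|*` (the induced cliques on `X` are the `C ∩ X`). -/
noncomputable def d0s (N : SStruct α) (X : Finset α) : ℤ :=
  (X.card : ℤ) - ∑ᶠ C : Finset α, (N.pm C : ℤ) * cardStar (C ∩ X)

/-- A finite subset `A` is strong (self-sufficient) in `B`: `d₀ₛ(X/A) ≥ 0` for every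
finite `X ⊆ B`. -/
def FinStrongIn (N : SStruct α) (A : Finset α) (B : Set α) : Prop :=
  ↑A ⊆ B ∧ ∀ X : Finset α, ↑X ⊆ B → d0s N A ≤ d0s N (X ∪ A)

/-- `A ≤ₛ B` for arbitrary (possibly infinite) subsets `A ⊆ B` of the ambient
S-structure `N`: every finite `D ⊆ A` strong in `A` is strong in `B`. -/
def StrongIn (N : SStruct α) (A B : Set α) : Prop :=
  A ⊆ B ∧ ∀ D : Finset α, ↑D ⊆ A → FinStrongIn N D A → FinStrongIn N D B

/-- The associated multiplicity function: `m(X) = Σ_{X ⊆ C} pm C`. -/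
noncomputable def multFun (N : SStruct α) (X : Finset α) : ℕ :=
  ∑ᶠ C ∈ {C : Finset α | X ⊆ C}, N.pm C

/-- `r(X)`: the number of three-element subsets `{x,y,z}` of `X` with `T x y z`. -/
noncomputable def rCount (T : β → β → β → Prop) (X : Finset β) : ℕ :=
  {s : Finset β | s ⊆ X ∧ ∃ x y z : β, x ≠ y ∧ x ≠ z ∧ y ≠ z ∧ s = {x, y, z} ∧ T x y z}.ncard

/-- The R-predimension `d₀(X) = |X| - r(X)`. -/
noncomputable def d0 (T : β → β → β → Prop) (X : Finset β) : ℤ :=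
  (X.card : ℤ) - (rCount T X : ℤ)

/-- The maximal witnessed S-cliques (universe, witness pair) of `X` in the
`T`-structure on `β`. -/
def MCPin (T : β → β → β → Prop) (X : Finset β) : Set (Finset β × Finset β) :=
  {p | 3 ≤ p.1.card ∧ p.1 ⊆ X ∧ ∃ x y : β, x ≠ y ∧ p.2 = {x, y} ∧
    x ∉ p.1 ∧ y ∉ p.1 ∧ (∀ c ∈ p.1, T c x y) ∧
    ∀ a ∈ X, a ∉ p.1 → a ≠ x → a ≠ y → ¬ T a x y}

/-- The pre-multiplicity of a universe `D` among the maximal cliques of `X`. -/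
noncomputable def pmRof (T : β → β → β → Prop) (X D : Finset β) : ℕ :=
  {w : Finset β | (D, w) ∈ MCPin T X}.ncard

/-- The S-predimension of `X` computed in the S-reduct of the `T`-structure:
`d₀ₛ(X) = |X| - Σ_D 𝔪(D)·(|D| - 2)`. -/
noncomputable def d0sOf (T : β → β → β → Prop) (X : Finset β) : ℤ :=
  (X.card : ℤ) -
    ∑ᶠ D ∈ {D : Finset β | ∃ w : Finset β, (D, w) ∈ MCPin T X},
      (pmRof T X D : ℤ) * ((D.card : ℤ) - 2)

/-- The relation of the generic R-representation `A*` of the S-structure `A`: for each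
clique `C` (with `pm C ≠ 0`) and each `i < pm C` a fresh pair of designated witnesses
`x^{C,i} = inr (C,i,true)`, `y^{C,i} = inr (C,i,false)` is related exactly to the
elements of `C`. -/
def Rstar (A : SStruct α) :
    (α ⊕ (Finset α × ℕ × Bool)) → (α ⊕ (Finset α × ℕ × Bool)) →
      (α ⊕ (Finset α × ℕ × Bool)) → Prop := fun u v w =>
  ∃ (C : Finset α) (i : ℕ), i < A.pm C ∧ ∃ c ∈ C,
    ({u, v, w} : Finset (α ⊕ (Finset α × ℕ × Bool))) =
      {Sum.inl c, Sum.inr (C, i, true), Sum.inr (C, i, false)}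

/-- The universe of the generic R-representation `A*`. -/
def starCarrier (A : SStruct α) : Set (α ⊕ (Finset α × ℕ × Bool)) :=
  (Sum.inl '' A.carrier) ∪
    {w | ∃ (C : Finset α) (i : ℕ) (b : Bool), w = Sum.inr (C, i, b) ∧ i < A.pm C}

/-! Every R-triangle of `A*` is `{c, x^{C,i}, y^{C,i}}` with `c ∈ C`. Hence the triangles inside
`X ⊆ A*` are indexed by the copies `(C, i)` whose two witnesses lie in `X` together with a point
of `C ∩ X₀`, where `X₀ = X ∩ A`. Each copy contributes `|C ∩ X₀| ≤ |C ∩ X₀|* + 2` triangles; its two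
witnesses pay for the `2`, and a clique `C` has at most `𝔪(C)` copies, so
`d₀(X) ≥ d₀ₛ(X₀) ≥ 0`.

For `A ≤ₛ A*`: a point sharing a pair `x ≠ y` with another point lies in `A`, since two distinct
triangles with two common points meet exactly in the two witnesses of one copy. So the points of `A*` outside `A`
neither enter a witnessed clique nor break the maximality of one: `X ∪ A` has the same maximal
witnessed cliques as `A`, and `d₀ₛ` can only grow with the cardinality. -/

open Finset Function

omit [DecidableEq α] in
theorem cardStar_nonneg (X : Finset α) : 0 ≤ cardStar X := le_max_left _ _

omit [DecidableEq α] in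
theorem card_le_cardStar_add_two (X : Finset α) : (X.card : ℤ) ≤ cardStar X + 2 := by
  have := le_max_right (0 : ℤ) (X.card - 2)
  rw [cardStar]
  linarith

omit [DecidableEq α] in
theorem three_le_card_of_cardStar_ne_zero {X : Finset α} (h : cardStar X ≠ 0) :
    3 ≤ X.card := by
  by_contra! hX
  exact h (max_eq_left (by omega))

theorem sum_le_finsum_mul_of_lt {γ : Type*} {s : Finset (γ × ℕ)} {m : γ → ℕ} {f : γ → ℤ}
    (hs : ∀ q ∈ s, q.2 < m q.1) (hf : ∀ C, 0 ≤ f C)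
    (hfin : (support fun C => (m C : ℤ) * f C).Finite) :
    ∑ q ∈ s, f q.1 ≤ ∑ᶠ C, (m C : ℤ) * f C := by
  classical
  have hfiber (C : γ) : #{q ∈ s | q.1 = C} ≤ m C := by
    refine (card_le_card_of_injOn Prod.snd (fun q hq => ?_) fun q hq q' hq' h => ?_).trans_eq
      (card_range (m C))
    · obtain ⟨hqs, rfl⟩ := mem_filter.mp (mem_coe.mp hq)
      exact mem_coe.mpr (mem_range.mpr (hs q hqs))
    · exact Prod.ext ((mem_filter.mp (mem_coe.mp hq)).2.trans
        (mem_filter.mp (mem_coe.mp hq')).2.symm) h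
  calc ∑ q ∈ s, f q.1
      = ∑ C ∈ s.image Prod.fst, #{q ∈ s | q.1 = C} • f C := sum_comp f Prod.fst
    _ ≤ ∑ C ∈ s.image Prod.fst, (m C : ℤ) * f C := sum_le_sum fun C _ => by
        rw [nsmul_eq_mul]
        gcongr
        · exact hf C
        · exact_mod_cast hfiber C
    _ ≤ ∑ C ∈ s.image Prod.fst ∪ hfin.toFinset, (m C : ℤ) * f C :=
        sum_le_sum_of_subset_of_nonneg subset_union_left fun C _ _ =>
          mul_nonneg (Nat.cast_nonneg _) (hf C)
    _ = ∑ᶠ C, (m C : ℤ) * f C :=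
        (finsum_eq_sum_of_support_subset _ (by simp)).symm

theorem pairwise_ne_of_card_eq_three {γ : Type*} [DecidableEq γ] {u v w : γ}
    (h : ({u, v, w} : Finset γ).card = 3) : u ≠ v ∧ u ≠ w ∧ v ≠ w := by
  grind [card_eq_three]

theorem MCPin_eq_of_subset {T : β → β → β → Prop} {X Y : Finset β} (hXY : X ⊆ Y)
    (hY : ∀ a ∈ Y, a ∉ X → ∀ d x y, d ≠ a → T d x y → ¬ T a x y) :
    MCPin T X = MCPin T Y := by
  ext ⟨D, w⟩
  simp only [MCPin, Set.mem_ofPred_eq]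
  constructor
  · rintro ⟨h3, hDX, x, y, hxy, hw, hx, hy, hD, hmax⟩
    refine ⟨h3, hDX.trans hXY, x, y, hxy, hw, hx, hy, hD, fun a haY haD hax hay => ?_⟩
    by_cases haX : a ∈ X
    · exact hmax a haX haD hax hay
    obtain ⟨d, hd⟩ := card_pos.mp (by omega : 0 < D.card)
    exact hY a haY haX d x y (ne_of_mem_of_not_mem hd haD) (hD d hd)
  · rintro ⟨h3, hDY, x, y, hxy, hw, hx, hy, hD, hmax⟩
    refine ⟨h3, fun a haD => ?_, x, y, hxy, hw, hx, hy, hD,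
      fun a haX => hmax a (hXY haX)⟩
    by_contra haX
    obtain ⟨d, hd, hda⟩ := exists_mem_ne (by omega : 1 < D.card) a
    exact hY a (hDY haD) haX d x y hda (hD d hd) (hD a haD)

theorem d0sOf_le_of_MCPin_eq {T : β → β → β → Prop} {X Y : Finset β} (hXY : X ⊆ Y)
    (h : MCPin T X = MCPin T Y) : d0sOf T X ≤ d0sOf T Y := by
  have hcard : (X.card : ℤ) ≤ Y.card := by exact_mod_cast card_le_card hXY
  simp only [d0sOf, pmRof, h]
  linarith

namespace SStruct

variable (A : SStruct α)

def starTriple (c : α) (C : Finset α) (i : ℕ) : Finset (α ⊕ (Finset α × ℕ × Bool)) :=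
  {Sum.inl c, Sum.inr (C, i, true), Sum.inr (C, i, false)}

@[simp] theorem mem_starTriple {z : α ⊕ (Finset α × ℕ × Bool)} {c : α} {C : Finset α} {i : ℕ} :
    z ∈ starTriple c C i ↔
      z = Sum.inl c ∨ z = Sum.inr (C, i, true) ∨ z = Sum.inr (C, i, false) := by
  simp [starTriple]

theorem card_starTriple (c : α) (C : Finset α) (i : ℕ) : (starTriple c C i).card = 3 := by
  simp [starTriple]

theorem starTriple_inj {c c' : α} {C C' : Finset α} {i i' : ℕ} :
    starTriple c C i = starTriple c' C' i' ↔ c = c' ∧ C = C' ∧ i = i' := by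
  refine ⟨fun h => ?_, by rintro ⟨rfl, rfl, rfl⟩; rfl⟩
  have hc : Sum.inl c ∈ starTriple c' C' i' := h ▸ by simp
  have hw : Sum.inr (C, i, true) ∈ starTriple c' C' i' := h ▸ by simp
  simp_all

-- Two distinct triples with two common points meet exactly in the two witnesses of one copy.
theorem isLeft_of_mem_starTriple {a x y : α ⊕ (Finset α × ℕ × Bool)} {c c' : α}
    {C C' : Finset α} {i i' : ℕ} (hxy : x ≠ y) (h : {a, x, y} ⊆ starTriple c C i)
    (h' : {x, y} ⊆ starTriple c' C' i') (ha' : a ∉ starTriple c' C' i') : a.isLeft := by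
  simp only [insert_subset_iff, singleton_subset_iff] at h h'
  obtain ⟨ha, hx, hy⟩ := h
  simp only [mem_starTriple] at ha hx hy h' ha'
  rcases ha with rfl | rfl | rfl <;> rcases hx with rfl | rfl | rfl <;>
    rcases hy with rfl | rfl | rfl <;> simp_all

theorem rstar_iff {u v w : α ⊕ (Finset α × ℕ × Bool)} :
    Rstar A u v w ↔ ∃ C i, i < A.pm C ∧ ∃ c ∈ C, {u, v, w} = starTriple c C i :=
  Iff.rfl

variable {A}

theorem rstar_pairwise_ne {u v w : α ⊕ (Finset α × ℕ × Bool)} (h : Rstar A u v w) :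
    u ≠ v ∧ u ≠ w ∧ v ≠ w := by
  obtain ⟨C, i, -, c, -, h⟩ := (rstar_iff A).mp h
  exact pairwise_ne_of_card_eq_three (h ▸ card_starTriple c C i)

theorem isLeft_of_rstar_of_ne {a d x y : α ⊕ (Finset α × ℕ × Bool)} (ha : Rstar A a x y)
    (hd : Rstar A d x y) (had : a ≠ d) : a.isLeft := by
  obtain ⟨hax, hay, hxy⟩ := rstar_pairwise_ne ha
  obtain ⟨C, i, -, c, -, h⟩ := (rstar_iff A).mp ha
  obtain ⟨C', i', -, c', -, h'⟩ := (rstar_iff A).mp hd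
  refine isLeft_of_mem_starTriple hxy h.subset ((subset_insert _ _).trans h'.subset) ?_
  rw [← h']
  simp [had, hax, hay]

@[simp] theorem inl_mem_starCarrier {c : α} : Sum.inl c ∈ starCarrier A ↔ c ∈ A.carrier := by
  simp [starCarrier]

theorem coe_toLeft_subset_carrier {X : Finset (α ⊕ (Finset α × ℕ × Bool))}
    (hX : ↑X ⊆ starCarrier A) : ↑X.toLeft ⊆ A.carrier :=
  fun _ hc => inl_mem_starCarrier.mp (hX (mem_toLeft.mp hc))

theorem MCPin_image_inl_eq_union (hfin : A.carrier.Finite)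
    {X : Finset (α ⊕ (Finset α × ℕ × Bool))} (hX : ↑X ⊆ starCarrier A) :
    MCPin (Rstar A) (hfin.toFinset.image Sum.inl) =
      MCPin (Rstar A) (X ∪ hfin.toFinset.image Sum.inl) := by
  refine MCPin_eq_of_subset subset_union_right fun a ha haZ d x y hda hd ha' => haZ ?_
  obtain ⟨c, rfl⟩ := Sum.isLeft_iff.mp (isLeft_of_rstar_of_ne ha' hd hda.symm)
  have hc : Sum.inl c ∈ X := (mem_union.mp ha).resolve_right haZ
  simpa using inl_mem_starCarrier.mp (hX hc)

variable (A)

theorem finite_support_pm_mul_cardStar (X : Finset α) :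
    (support fun C => (A.pm C : ℤ) * cardStar (C ∩ X)).Finite := by
  refine (A.finite_meets X).subset fun C hC => ?_
  obtain ⟨hpm, hstar⟩ := mul_ne_zero_iff.mp hC
  exact ⟨by exact_mod_cast hpm, three_le_card_of_cardStar_ne_zero hstar⟩

def witnessedPairs (X : Finset (α ⊕ (Finset α × ℕ × Bool))) : Finset (Finset α × ℕ) :=
  (X.toRight.image fun p => (p.1, p.2.1)).filter fun q =>
    q.2 < A.pm q.1 ∧ Sum.inr (q.1, q.2, true) ∈ X ∧ Sum.inr (q.1, q.2, false) ∈ X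

variable {A}

@[simp] theorem mem_witnessedPairs {X : Finset (α ⊕ (Finset α × ℕ × Bool))}
    {q : Finset α × ℕ} : q ∈ A.witnessedPairs X ↔
      q.2 < A.pm q.1 ∧ Sum.inr (q.1, q.2, true) ∈ X ∧ Sum.inr (q.1, q.2, false) ∈ X := by
  simp only [witnessedPairs, mem_filter, mem_image, mem_toRight, and_iff_right_iff_imp]
  exact fun ⟨_, ht, _⟩ => ⟨(q.1, q.2, true), ht, rfl⟩

variable (A)

theorem rCount_rstar (X : Finset (α ⊕ (Finset α × ℕ × Bool))) :
    rCount (Rstar A) X = ∑ q ∈ A.witnessedPairs X, (q.1 ∩ X.toLeft).card := by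
  have htri : {s | s ⊆ X ∧ ∃ x y z, x ≠ y ∧ x ≠ z ∧ y ≠ z ∧ s = {x, y, z} ∧ Rstar A x y z} =
      ↑(((A.witnessedPairs X).sigma fun q => q.1 ∩ X.toLeft).image
        fun p => starTriple p.2 p.1.1 p.1.2) := by
    ext s
    simp only [Set.mem_ofPred_eq, coe_image, Set.mem_image, mem_coe, mem_sigma, mem_inter,
      mem_toLeft, mem_witnessedPairs]
    constructor
    · rintro ⟨hsX, x, y, z, -, -, -, rfl, C, i, hi, c, hc, h⟩
      have hmem : ∀ z ∈ starTriple c C i, z ∈ X := fun z hz => hsX (h ▸ hz)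
      exact ⟨⟨(C, i), c⟩, ⟨⟨hi, hmem _ (by simp), hmem _ (by simp)⟩, hc, hmem _ (by simp)⟩,
        h.symm⟩
    · rintro ⟨⟨⟨C, i⟩, c⟩, ⟨⟨hi, ht, hf⟩, hc, hcX⟩, rfl⟩
      refine ⟨fun z hz => ?_, Sum.inl c, Sum.inr (C, i, true), Sum.inr (C, i, false),
        by simp, by simp, by simp, rfl, C, i, hi, c, hc, rfl⟩
      rcases mem_starTriple.mp hz with rfl | rfl | rfl <;> assumption
  have hinj : Injective fun p : (_ : Finset α × ℕ) × α => starTriple p.2 p.1.1 p.1.2 := by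
    rintro ⟨⟨C, i⟩, c⟩ ⟨⟨C', i'⟩, c'⟩ h
    obtain ⟨rfl, rfl, rfl⟩ := starTriple_inj.mp h
    rfl
  rw [rCount, htri, Set.ncard_coe_finset, card_image_of_injective _ hinj, card_sigma]

theorem card_toLeft_add_two_mul_card_witnessedPairs_le
    (X : Finset (α ⊕ (Finset α × ℕ × Bool))) :
    X.toLeft.card + 2 * (A.witnessedPairs X).card ≤ X.card := by
  rw [← card_toLeft_add_card_toRight]
  gcongr
  calc 2 * (A.witnessedPairs X).card = (A.witnessedPairs X ×ˢ (univ : Finset Bool)).card := by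
        simp [mul_comm]
    _ ≤ X.toRight.card := by
        refine card_le_card_of_injOn (fun p => (p.1.1, p.1.2, p.2)) (fun p hp => ?_) ?_
        · obtain ⟨⟨C, i⟩, b⟩ := p
          obtain ⟨-, ht, hf⟩ := mem_witnessedPairs.mp (mem_product.mp hp).1
          cases b <;> simpa
        · rintro ⟨⟨C, i⟩, b⟩ - ⟨⟨C', i'⟩, b'⟩ - h
          simp_all

theorem d0s_toLeft_le_d0 (X : Finset (α ⊕ (Finset α × ℕ × Bool))) :
    d0s A X.toLeft ≤ d0 (Rstar A) X := by
  set P := A.witnessedPairs X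
  have hcliques : ∑ q ∈ P, cardStar (q.1 ∩ X.toLeft) ≤
      ∑ᶠ C, (A.pm C : ℤ) * cardStar (C ∩ X.toLeft) :=
    sum_le_finsum_mul_of_lt (fun q hq => (mem_witnessedPairs.mp hq).1)
      (fun _ => cardStar_nonneg _) (A.finite_support_pm_mul_cardStar _)
  have htriangles : ∑ q ∈ P, ((q.1 ∩ X.toLeft).card : ℤ) ≤
      ∑ q ∈ P, cardStar (q.1 ∩ X.toLeft) + 2 * P.card := by
    calc ∑ q ∈ P, ((q.1 ∩ X.toLeft).card : ℤ)
        ≤ ∑ q ∈ P, (cardStar (q.1 ∩ X.toLeft) + 2) :=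
          sum_le_sum fun q _ => card_le_cardStar_add_two _
      _ = ∑ q ∈ P, cardStar (q.1 ∩ X.toLeft) + 2 * P.card := by
          rw [sum_add_distrib, sum_const, nsmul_eq_mul]
          ring
  have hcard : (X.toLeft.card : ℤ) + 2 * P.card ≤ X.card := by
    exact_mod_cast A.card_toLeft_add_two_mul_card_witnessedPairs_le X
  rw [d0s, d0, rCount_rstar]
  push_cast
  linarith

end SStruct

/-- for a finite S-structure `A` with `∅ ≤ₛ A`, the generic
R-representation `A*` satisfies `∅ ≤ A*` (every subset of `A*` has nonnegative
R-predimension) and `A ≤ₛ A*` (the image of `A` is strong in the S-reduct of `A*`). -/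
theorem stmt12 (A : SStruct α) (hfin : A.carrier.Finite)
    (hCs : ∀ X : Finset α, ↑X ⊆ A.carrier → 0 ≤ d0s A X) :
    (∀ X : Finset (α ⊕ (Finset α × ℕ × Bool)), ↑X ⊆ starCarrier A →
      0 ≤ d0 (Rstar A) X) ∧
    (∀ X : Finset (α ⊕ (Finset α × ℕ × Bool)), ↑X ⊆ starCarrier A →
      d0sOf (Rstar A) (hfin.toFinset.image Sum.inl) ≤
        d0sOf (Rstar A) (X ∪ hfin.toFinset.image Sum.inl)) :=
  ⟨fun X hX => (hCs _ (SStruct.coe_toLeft_subset_carrier hX)).trans (A.d0s_toLeft_le_d0 X),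
    fun _ hX => d0sOf_le_of_MCPin_eq subset_union_right (A.MCPin_image_inl_eq_union hfin hX)⟩
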